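/- Let H be a real Hilbert space, K > 0, ν > 0, and define J(u) = −u − ν⁻¹ C(u,u) + ν⁻¹ g for fixed g ∈ H, where C : H × H → H is bilinear and satisfies |⟨C(u,u−v) + C(u−v,v), u−v⟩| ≤ K‖u−v‖²(‖u‖+‖v‖). If u, v lie in the closed ball of radius R with ν⁻¹ K · 2R ≤ 1 − α for some α ∈ (0,1), then ⟨J(u) − J(v), u − v⟩ ≤ −α ‖u − v‖². In particular J is strongly dissipative on the ball of radius R. -/
import Mathlib


open scoped RealInnerProductSpace

theorem strongly_dissipative_on_ball
    {H : Type*} [NormedAddCommGroup H] [InnerProductSpace ℝ H]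
    (ν K R α : ℝ) (hν : 0 < ν) (hK : 0 < K) (hR : 0 < R)
    (hα : α ∈ Set.Ioo (0 : ℝ) 1)
    (C : H →ₗ[ℝ] H →ₗ[ℝ] H)
    (hC : ∀ u v : H, |⟪C u (u - v) + C (u - v) v, u - v⟫| ≤
      K * ‖u - v‖ ^ 2 * (‖u‖ + ‖v‖))
    (g : H)
    (J : H → H) (hJ : ∀ u : H, J u = -u - ν⁻¹ • C u u + ν⁻¹ • g)
    (hsmall : ν⁻¹ * K * (2 * R) ≤ 1 - α) :
    ∀ u v : H, ‖u‖ ≤ R → ‖v‖ ≤ R →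
      ⟪J u - J v, u - v⟫ ≤ -α * ‖u - v‖ ^ 2 := by
  intro u v hu hv
  have hsplit : C u u - C v v = C u (u - v) + C (u - v) v := by
    simp [map_sub, LinearMap.sub_apply]
  have hJd : J u - J v = -(u - v) - ν⁻¹ • (C u (u - v) + C (u - v) v) := by
    rw [hJ, hJ, ← hsplit]
    rw [smul_sub]
    abel
  rw [hJd, sub_eq_add_neg, inner_add_left, inner_neg_left, inner_neg_left,
    real_inner_self_eq_norm_sq, real_inner_smul_left]
  have habs := hC u v
  have h1 : -(ν⁻¹ * ⟪C u (u - v) + C (u - v) v, u - v⟫) ≤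
      ν⁻¹ * (K * ‖u - v‖ ^ 2 * (‖u‖ + ‖v‖)) := by
    have : -⟪C u (u - v) + C (u - v) v, u - v⟫ ≤ K * ‖u - v‖ ^ 2 * (‖u‖ + ‖v‖) :=
      (neg_le_abs _).trans (by simpa [abs_neg] using habs)
    rw [← mul_neg]
    exact mul_le_mul_of_nonneg_left this (inv_nonneg.mpr hν.le)
  have h2 : ν⁻¹ * (K * ‖u - v‖ ^ 2 * (‖u‖ + ‖v‖)) ≤ (1 - α) * ‖u - v‖ ^ 2 := by
    have hsum : ‖u‖ + ‖v‖ ≤ 2 * R := by linarith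
    have hnn : (0:ℝ) ≤ ‖u - v‖ ^ 2 := sq_nonneg _
    calc ν⁻¹ * (K * ‖u - v‖ ^ 2 * (‖u‖ + ‖v‖))
        ≤ ν⁻¹ * (K * ‖u - v‖ ^ 2 * (2 * R)) := by
          apply mul_le_mul_of_nonneg_left _ (inv_nonneg.mpr hν.le)
          exact mul_le_mul_of_nonneg_left hsum (by positivity)
      _ = (ν⁻¹ * K * (2 * R)) * ‖u - v‖ ^ 2 := by ring
      _ ≤ (1 - α) * ‖u - v‖ ^ 2 := mul_le_mul_of_nonneg_right hsmall hnn
  nlinarith [sq_nonneg ‖u - v‖]
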